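/- Let f ∈ Homeo₀(𝕋^d) with lift F, let K ⊆ 𝕋^d be a compact f-invariant set on which f is minimal, let v ∈ ℝ^d \ {0}, λ ∈ ℝ with ρ_K(F) ⊆ λv + {v}^⊥, and suppose sup_{n∈ℕ, z∈K} |D_v(n,z)| = ∞. Then there exists a residual (dense G_δ) subset ℛ ⊆ K such that sup_{n∈ℕ} D_v(n,z) = +∞ and inf_{n∈ℕ} D_v(n,z) = −∞ for all z ∈ ℛ. -/

import Mathlib

open Filter Topology Set
open scoped RealInnerProductSpace

noncomputable section

abbrev E (d : ℕ) : Type := EuclideanSpace ℝ (Fin d)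

/-- The integer lattice `ℤ^d` inside `ℝ^d`. -/
def intLattice (d : ℕ) : AddSubgroup (E d) where
  carrier := {x : E d | ∀ i, ∃ m : ℤ, x i = (m : ℝ)}
  zero_mem' := fun i => ⟨0, by simp⟩
  add_mem' := by
    intro a b ha hb i
    obtain ⟨m, hm⟩ := ha i
    obtain ⟨n, hn⟩ := hb i
    refine ⟨m + n, ?_⟩
    have h : (a + b) i = a i + b i := rfl
    rw [h, hm, hn]; push_cast; ring
  neg_mem' := by
    intro a ha i
    obtain ⟨m, hm⟩ := ha i
    refine ⟨-m, ?_⟩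
    have h : (-a) i = -(a i) := rfl
    rw [h, hm]; push_cast; ring

/-- The torus `𝕋^d = ℝ^d / ℤ^d`. -/
abbrev Torus (d : ℕ) : Type := E d ⧸ intLattice d

/-- The canonical projection `π : ℝ^d → 𝕋^d`. -/
def Tproj (d : ℕ) : E d → Torus d := QuotientAddGroup.mk

/-- `F` is a lift of `f`; together with `F` being a homeomorphism this encodes
`f ∈ Homeo₀(𝕋^d)` with lift `F`. -/
def IsLiftOf {d : ℕ} (F : E d ≃ₜ E d) (f : Torus d → Torus d) : Prop :=
  (∀ z : E d, Tproj d (F z) = f (Tproj d z)) ∧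
  (∀ z : E d, ∀ m ∈ intLattice d, F (z + m) = F z + m)

/-- The rotation set of `f` on `A ⊆ 𝕋^d`. -/
def rotSetOn {d : ℕ} (F : E d ≃ₜ E d) (A : Set (Torus d)) : Set (E d) :=
  {ρ | ∃ (n : ℕ → ℕ) (z : ℕ → E d), StrictMono n ∧ (∀ i, Tproj d (z i) ∈ A) ∧
      Tendsto (fun i => (n i : ℝ)⁻¹ • ((F : E d → E d)^[n i] (z i) - z i)) atTop (𝓝 ρ)}

/-- The rotation set `ρ(F)`. -/
def rotSet {d : ℕ} (F : E d ≃ₜ E d) : Set (E d) := rotSetOn F Set.univ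

/-- The deviation from the constant rotation, `D(n,z) = F^n(z) - z - nρ`. -/
def dev {d : ℕ} (F : E d ≃ₜ E d) (ρ : E d) (n : ℕ) (z : E d) : E d :=
  (F : E d → E d)^[n] z - z - (n : ℝ) • ρ

/-- The deviation parallel to `v`, `D_v(n,z) = ⟨F^n(z) - z - nρ, v⟩`. -/
def devIn {d : ℕ} (F : E d ≃ₜ E d) (ρ : E d) (v : E d) (n : ℕ) (z : E d) : ℝ :=
  ⟪dev F ρ n z, v⟫

/-- `1, ρ_1, …, ρ_d` are linearly independent over `ℚ`. -/
def TotallyIrrational {d : ℕ} (ρ : E d) : Prop :=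
  ∀ (k : Fin d → ℤ) (m : ℤ), (∑ i, (k i : ℝ) * ρ i) = (m : ℝ) → ∀ i, k i = 0

/-- `f` has bounded mean motion (w.r.t. the rotation vector `ρ`). -/
def BoundedMeanMotion {d : ℕ} (F : E d ≃ₜ E d) (ρ : E d) : Prop :=
  ∃ C : ℝ, ∀ (n : ℕ) (z : E d), ‖dev F ρ n z‖ ≤ C

/-- `f` is non-wandering: no nonempty open set is wandering. -/
def NonWandering {d : ℕ} (f : Torus d → Torus d) : Prop :=
  ∀ U : Set (Torus d), IsOpen U → U.Nonempty → ∃ n : ℕ, 0 < n ∧ (U ∩ f^[n] '' U).Nonempty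

/-- Projection of the deviation vector to the linear subspace `V`. -/
def devProj {d : ℕ} (F : E d ≃ₜ E d) (V : Submodule ℝ (E d)) (ρ : E d) (n : ℕ) (z : E d) : E d :=
  (V.orthogonalProjectionOnto (dev F ρ n z) : E d)

/-- The set of asymptotic directions `𝒜_V(z)`. -/
def asympDirs {d : ℕ} (F : E d ≃ₜ E d) (V : Submodule ℝ (E d)) (ρ : E d) (z : E d) :
    Set (E d) :=
  {v | ‖v‖ = 1 ∧ ∀ ε > (0 : ℝ), ∀ r > (0 : ℝ), ∃ n : ℕ,
      r < ‖devProj F V ρ n z‖ ∧ ‖(‖devProj F V ρ n z‖)⁻¹ • devProj F V ρ n z - v‖ < ε}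

/-- `S^+(v) = {w ∈ 𝕊^{d-1} : ⟨v,w⟩ > 0}`. -/
def Splus {d : ℕ} (v : E d) : Set (E d) := {w | ‖w‖ = 1 ∧ 0 < ⟪v, w⟫}

/-- `z` is `ε`-Lyapunov stable for `h`. -/
def LyapStable {X : Type*} [PseudoMetricSpace X] (h : X → X) (ε : ℝ) (z : X) : Prop :=
  ∃ δ > (0 : ℝ), ∀ n : ℕ, ∀ w, dist z w < δ → dist (h^[n] z) (h^[n] w) < ε

/-- `ε_f`, the largest `ε` such that `ε`-close points have `1/2`-close images. -/
def epsF {d : ℕ} (f : Torus d → Torus d) : ℝ :=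
  sSup {ε : ℝ | 0 < ε ∧ ∀ z z' : Torus d, dist z z' < ε → dist (f z) (f z') < 1 / 2}

/-- `ℤ`-indexed iterates of a homeomorphism. -/
def iterZ {d : ℕ} (F : E d ≃ₜ E d) : ℤ → E d → E d
  | .ofNat n => (F : E d → E d)^[n]
  | .negSucc n => (F.symm : E d → E d)^[n + 1]

/-- `ℤ`-indexed deviations parallel to `v`. -/
def devZIn {d : ℕ} (F : E d ≃ₜ E d) (ρ v : E d) (n : ℤ) (z : E d) : ℝ :=
  ⟪iterZ F n z - z - (n : ℝ) • ρ, v⟫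

/-!
`D_v(n, ·)` descends to a continuous additive cocycle `D` over `f` on the torus, and the hypothesis
on the rotation set makes `D` uniformly sublinear on `K`. If `D` were bounded above on a relatively
open piece of `K`, minimality (every orbit enters that piece within a bounded time) would bound `D`
above on all of `K`. A cocycle bounded above by `C` is bounded below by `-(C + 1)`: a single time
at which it drops below `-(C + 1)` recurs along every orbit with bounded gaps, forcing linear
decrease and contradicting sublinearity. As `D` is unbounded on `K`, the open sets
`⋃ₙ {D n > m}` and `⋃ₙ {D n < -m}` are therefore dense in `K`, and Baire's theorem in the compact
set `K` concludes.
-/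

section Cocycle

variable {X : Type*} {f : X → X} {K : Set X} {D : ℕ → X → ℝ}

def IsAddCocycle (f : X → X) (D : ℕ → X → ℝ) : Prop :=
  ∀ m n x, D (m + n) x = D n (f^[m] x) + D m x

def UniformlySublinearOn (D : ℕ → X → ℝ) (K : Set X) : Prop :=
  ∀ ε > (0 : ℝ), ∃ N, ∀ n ≥ N, ∀ x ∈ K, |D n x| ≤ ε * n

lemma IsAddCocycle.apply_zero (hD : IsAddCocycle f D) (x : X) : D 0 x = 0 := by
  simpa using hD 0 0 x

lemma IsAddCocycle.neg (hD : IsAddCocycle f D) : IsAddCocycle f (-D) := fun m n x => by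
  simp only [Pi.neg_apply, hD m n x, neg_add]

lemma UniformlySublinearOn.neg (hD : UniformlySublinearOn D K) : UniformlySublinearOn (-D) K := by
  simpa only [UniformlySublinearOn, Pi.neg_apply, abs_neg] using hD

lemma IsAddCocycle.exists_le_neg_of_forall_exists_lt (hD : IsAddCocycle f D) (hfK : MapsTo f K K)
    {C : ℝ} (hC : ∀ x ∈ K, ∀ n, D n x ≤ C) {n₀ N : ℕ} (hn₀ : 0 < n₀)
    (hN : ∀ x ∈ K, ∃ k ≤ N, D n₀ (f^[k] x) < -(C + 1)) :
    ∀ j : ℕ, ∀ x ∈ K, ∃ T, j ≤ T ∧ T ≤ j * (N + n₀) ∧ D T x ≤ -j := by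
  intro j
  induction j with
  | zero => exact fun x _ => ⟨0, le_rfl, Nat.zero_le _, by simp [hD.apply_zero]⟩
  | succ j ih =>
    intro x hx
    obtain ⟨k, hkN, hk⟩ := hN x hx
    obtain ⟨T, hjT, hTj, hT⟩ := ih _ (hfK.iterate (k + n₀) hx)
    refine ⟨k + n₀ + T, by omega, by rw [Nat.succ_mul]; omega, ?_⟩
    have h₁ := hD (k + n₀) T x
    have h₂ := hD k n₀ x
    push_cast
    linarith [hC x hx k]

variable [TopologicalSpace X]

lemma exists_uniform_hitting_time (hf : Continuous f) (hKc : IsCompact K)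
    (hmin : ∀ x ∈ K, K ⊆ closure (range fun n : ℕ => f^[n] x))
    {V : Set X} (hV : IsOpen V) (hVK : (V ∩ K).Nonempty) :
    ∃ N, ∀ x ∈ K, ∃ k ≤ N, f^[k] x ∈ V := by
  obtain ⟨x₀, hx₀V, hx₀K⟩ := hVK
  have hcover : K ⊆ ⋃ n : ℕ, f^[n] ⁻¹' V := fun x hx => by
    obtain ⟨-, hyV, n, rfl⟩ := mem_closure_iff.1 (hmin x hx hx₀K) V hV hx₀V
    exact mem_iUnion.2 ⟨n, hyV⟩
  obtain ⟨t, ht⟩ := hKc.elim_finite_subcover _ (fun n => hV.preimage (hf.iterate n)) hcover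
  refine ⟨t.sup id, fun x hx => ?_⟩
  obtain ⟨k, hkt, hk⟩ := mem_iUnion₂.1 (ht hx)
  exact ⟨k, Finset.le_sup (f := id) hkt, hk⟩

lemma IsCompact.exists_uniform_upper_bound (hKc : IsCompact K) (hDc : ∀ n, Continuous (D n))
    (N : ℕ) : ∃ B, ∀ k ≤ N, ∀ x ∈ K, D k x ≤ B := by
  obtain ⟨B, hB⟩ :=
    (finite_Iic N).bddAbove_biUnion.2 fun k _ => (hKc.image (hDc k)).bddAbove
  exact ⟨B, fun k hk x hx => hB (mem_biUnion (mem_Iic.2 hk) (mem_image_of_mem _ hx))⟩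

lemma IsAddCocycle.bddAbove_of_bddAbove_inter_open (hD : IsAddCocycle f D) (hf : Continuous f)
    (hKc : IsCompact K) (hfK : MapsTo f K K)
    (hmin : ∀ x ∈ K, K ⊆ closure (range fun n : ℕ => f^[n] x))
    (hDc : ∀ n, Continuous (D n))
    {V : Set X} (hV : IsOpen V) (hVK : (V ∩ K).Nonempty) {C : ℝ}
    (hC : ∀ x ∈ V ∩ K, ∀ n, D n x ≤ C) :
    ∃ C', ∀ x ∈ K, ∀ n, D n x ≤ C' := by
  obtain ⟨N, hN⟩ := exists_uniform_hitting_time hf hKc hmin hV hVK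
  obtain ⟨B, hB⟩ := hKc.exists_uniform_upper_bound hDc N
  refine ⟨max C 0 + B, fun x hx n => ?_⟩
  rcases le_or_gt n N with hn | hn
  · linarith [hB n hn x hx, le_max_right C 0]
  · obtain ⟨k, hkN, hk⟩ := hN x hx
    have hsplit := hD k (n - k) x
    rw [Nat.add_sub_cancel' (hkN.trans hn.le)] at hsplit
    linarith [hC _ ⟨hk, hfK.iterate k hx⟩ (n - k), hB k hkN x hx, le_max_left C 0]

lemma IsAddCocycle.bddBelow_of_bddAbove (hD : IsAddCocycle f D) (hf : Continuous f)
    (hKc : IsCompact K) (hfK : MapsTo f K K)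
    (hmin : ∀ x ∈ K, K ⊆ closure (range fun n : ℕ => f^[n] x))
    (hDc : ∀ n, Continuous (D n))
    (hsub : UniformlySublinearOn D K) {C : ℝ} (hC : ∀ x ∈ K, ∀ n, D n x ≤ C) :
    ∀ x ∈ K, ∀ n, -(C + 1) ≤ D n x := by
  by_contra! ⟨x₀, hx₀, n₀, hlt⟩
  have hn₀ : 0 < n₀ := Nat.pos_of_ne_zero <| by
    rintro rfl
    linarith [hC x₀ hx₀ 0, hD.apply_zero x₀]
  obtain ⟨N, hN⟩ := exists_uniform_hitting_time hf hKc hmin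
    (isOpen_lt (hDc n₀) continuous_const) ⟨x₀, hlt, hx₀⟩
  obtain ⟨N₁, hN₁⟩ := hsub (1 / (2 * (N + n₀))) (by positivity)
  obtain ⟨T, hjT, hTj, hT⟩ :=
    hD.exists_le_neg_of_forall_exists_lt hfK hC hn₀ hN (N₁ + 1) x₀ hx₀
  have hTj' : (T : ℝ) ≤ (N₁ + 1) * (N + n₀) := by exact_mod_cast hTj
  have hsmall : 1 / (2 * (N + n₀)) * (T : ℝ) ≤ (N₁ + 1) / 2 := by
    rw [div_mul_eq_mul_div, one_mul, div_le_div_iff₀ (by positivity) two_pos]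
    nlinarith
  have hT_ge := (abs_le.1 (hN₁ T (by omega) x₀ hx₀)).1
  push_cast at hT
  linarith

lemma IsAddCocycle.exists_lt_of_unbounded (hD : IsAddCocycle f D) (hf : Continuous f)
    (hKc : IsCompact K) (hfK : MapsTo f K K)
    (hmin : ∀ x ∈ K, K ⊆ closure (range fun n : ℕ => f^[n] x))
    (hDc : ∀ n, Continuous (D n))
    (hsub : UniformlySublinearOn D K) (hunb : ∀ C, ∃ x ∈ K, ∃ n, C < |D n x|)
    {V : Set X} (hV : IsOpen V) (hVK : (V ∩ K).Nonempty) (c : ℝ) :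
    ∃ x ∈ V ∩ K, ∃ n, c < D n x := by
  by_contra! h
  obtain ⟨C, hC⟩ := hD.bddAbove_of_bddAbove_inter_open hf hKc hfK hmin hDc hV hVK h
  obtain ⟨x, hx, n, hlt⟩ := hunb (C + 1)
  have hlow := hD.bddBelow_of_bddAbove hf hKc hfK hmin hDc hsub hC x hx n
  exact hlt.not_ge (abs_le.2 ⟨hlow, (hC x hx n).trans (by linarith)⟩)

lemma subset_closure_inter_iff_dense {T : Set X} :
    K ⊆ closure (T ∩ K) ↔ Dense ((↑) ⁻¹' T : Set K) := by
  rw [Topology.IsInducing.subtypeVal.dense_iff, Subtype.image_preimage_coe, inter_comm]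
  exact ⟨fun h x => h x.2, fun h x hx => h ⟨x, hx⟩⟩

lemma subset_closure_iInter_inter [BaireSpace K] {ι : Type*} [Countable ι] {U : ι → Set X}
    (hU : ∀ i, IsOpen (U i)) (hUd : ∀ i, K ⊆ closure (U i ∩ K)) :
    K ⊆ closure ((⋂ i, U i) ∩ K) := by
  rw [subset_closure_inter_iff_dense, preimage_iInter]
  exact dense_iInter_of_isOpen (fun i => (hU i).preimage continuous_subtype_val)
    fun i => subset_closure_inter_iff_dense.1 (hUd i)

lemma subset_closure_inter_inter [BaireSpace K] {S T : Set X} (hS : IsGδ S) (hT : IsGδ T)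
    (hSd : K ⊆ closure (S ∩ K)) (hTd : K ⊆ closure (T ∩ K)) :
    K ⊆ closure (S ∩ T ∩ K) := by
  rw [subset_closure_inter_iff_dense] at *
  rw [preimage_inter]
  exact Dense.inter_of_Gδ (hS.preimage continuous_subtype_val)
    (hT.preimage continuous_subtype_val) hSd hTd

lemma IsAddCocycle.exists_isGδ_forall_exists_lt [BaireSpace K] (hD : IsAddCocycle f D)
    (hf : Continuous f) (hKc : IsCompact K) (hfK : MapsTo f K K)
    (hmin : ∀ x ∈ K, K ⊆ closure (range fun n : ℕ => f^[n] x))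
    (hDc : ∀ n, Continuous (D n))
    (hsub : UniformlySublinearOn D K) (hunb : ∀ C, ∃ x ∈ K, ∃ n, C < |D n x|) :
    ∃ T, IsGδ T ∧ K ⊆ closure (T ∩ K) ∧ ∀ x ∈ T, ∀ c, ∃ n, c < D n x := by
  have hU : ∀ m : ℕ, IsOpen (⋃ n, {x | (m : ℝ) < D n x}) := fun m =>
    isOpen_iUnion fun n => isOpen_lt continuous_const (hDc n)
  refine ⟨⋂ m : ℕ, ⋃ n, {x | (m : ℝ) < D n x}, .iInter fun m => (hU m).isGδ,
    subset_closure_iInter_inter hU fun m x hx => ?_, fun x hx c => ?_⟩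
  · refine mem_closure_iff.2 fun V hV hxV => ?_
    obtain ⟨y, ⟨hyV, hyK⟩, n, hn⟩ :=
      hD.exists_lt_of_unbounded hf hKc hfK hmin hDc hsub hunb hV ⟨x, hxV, hx⟩ m
    exact ⟨y, hyV, mem_iUnion.2 ⟨n, hn⟩, hyK⟩
  · obtain ⟨m, hm⟩ := exists_nat_ge c
    obtain ⟨n, hn⟩ := mem_iUnion.1 (mem_iInter.1 hx m)
    exact ⟨n, hm.trans_lt hn⟩

theorem IsAddCocycle.exists_isGδ_forall_exists_lt_and_gt [BaireSpace K] (hD : IsAddCocycle f D)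
    (hf : Continuous f) (hKc : IsCompact K) (hfK : MapsTo f K K)
    (hmin : ∀ x ∈ K, K ⊆ closure (range fun n : ℕ => f^[n] x))
    (hDc : ∀ n, Continuous (D n))
    (hsub : UniformlySublinearOn D K) (hunb : ∀ C, ∃ x ∈ K, ∃ n, C < |D n x|) :
    ∃ T, IsGδ T ∧ K ⊆ closure (T ∩ K) ∧
      ∀ x ∈ T, (∀ c, ∃ n, c < D n x) ∧ ∀ c, ∃ n, D n x < c := by
  obtain ⟨S, hS, hSd, hSx⟩ := hD.exists_isGδ_forall_exists_lt hf hKc hfK hmin hDc hsub hunb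
  obtain ⟨S', hS', hS'd, hS'x⟩ := hD.neg.exists_isGδ_forall_exists_lt hf hKc hfK hmin
    (fun n => (hDc n).neg) hsub.neg (by simpa only [Pi.neg_apply, abs_neg] using hunb)
  refine ⟨S ∩ S', hS.inter hS', subset_closure_inter_inter hS hS' hSd hS'd,
    fun x hx => ⟨hSx x hx.1, fun c => ?_⟩⟩
  obtain ⟨n, hn⟩ := hS'x x hx.2 (-c)
  exact ⟨n, by simpa only [Pi.neg_apply, neg_lt_neg_iff] using hn⟩

end Cocycle

section Lift

variable {d : ℕ} {F : E d ≃ₜ E d}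

lemma Tproj_surjective : Function.Surjective (Tproj d) := QuotientAddGroup.mk_surjective

lemma IsLiftOf.continuous {f : Torus d → Torus d} (h : IsLiftOf F f) : Continuous f := by
  refine (QuotientAddGroup.isQuotientMap_mk (intLattice d)).continuous_iff.2 ?_
  have hcomm : f ∘ QuotientAddGroup.mk = Tproj d ∘ F := funext fun z => (h.1 z).symm
  rw [hcomm]
  exact continuous_quot_mk.comp F.continuous

lemma iterate_add_of_mem_intLattice
    (hper : ∀ z : E d, ∀ m ∈ intLattice d, F (z + m) = F z + m)
    (n : ℕ) (z : E d) {m : E d} (hm : m ∈ intLattice d) :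
    F^[n] (z + m) = F^[n] z + m :=
  Function.Commute.iterate_left (g := (· + m)) (fun z => hper z m hm) n z

lemma devIn_add_of_mem_intLattice (hper : ∀ z : E d, ∀ m ∈ intLattice d, F (z + m) = F z + m)
    (ρ v : E d) (n : ℕ) (z : E d) {m : E d} (hm : m ∈ intLattice d) :
    devIn F ρ v n (z + m) = devIn F ρ v n z := by
  simp only [devIn, dev, iterate_add_of_mem_intLattice hper n z hm, add_sub_add_right_eq_sub]

lemma continuous_devIn (ρ v : E d) (n : ℕ) : Continuous (devIn F ρ v n) :=
  (((F.continuous.iterate n).sub continuous_id).sub continuous_const).inner continuous_const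

lemma devIn_add (ρ v : E d) (a b : ℕ) (z : E d) :
    devIn F ρ v (a + b) z = devIn F ρ v b (F^[a] z) + devIn F ρ v a z := by
  rw [devIn, devIn, devIn, ← inner_add_left, dev, dev, dev, add_comm a b,
    Function.iterate_add_apply, Nat.cast_add, add_smul]
  congr 1
  abel

lemma inner_inv_smul_sub (ρ v : E d) {n : ℕ} (hn : n ≠ 0) (z : E d) :
    ⟪(n : ℝ)⁻¹ • (F^[n] z - z) - ρ, v⟫ = (n : ℝ)⁻¹ * devIn F ρ v n z := by
  rw [devIn, dev, ← real_inner_smul_left, smul_sub (n : ℝ)⁻¹ (F^[n] z - z),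
    inv_smul_smul₀ (Nat.cast_ne_zero.2 hn)]

lemma exists_mem_intLattice_norm_sub_le (w : E d) :
    ∃ m ∈ intLattice d, ‖w - m‖ ≤ √d := by
  refine ⟨WithLp.toLp 2 fun i => (⌊w i⌋ : ℝ), fun i => ⟨⌊w i⌋, rfl⟩, ?_⟩
  rw [EuclideanSpace.norm_eq]
  refine Real.sqrt_le_sqrt ?_
  calc ∑ i, ‖(w - WithLp.toLp 2 fun i => (⌊w i⌋ : ℝ)) i‖ ^ 2
      = ∑ i, Int.fract (w i) ^ 2 :=
        Finset.sum_congr rfl fun i _ => by rw [Real.norm_eq_abs, sq_abs]; rfl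
    _ ≤ ∑ _i : Fin d, (1 : ℝ) := Finset.sum_le_sum fun i _ => by
        nlinarith [Int.fract_nonneg (w i), Int.fract_lt_one (w i)]
    _ = d := by simp

lemma exists_norm_le_of_intLattice_periodic {Y : Type*} [SeminormedAddCommGroup Y]
    {g : E d → Y} (hg : Continuous g) (hper : ∀ z, ∀ m ∈ intLattice d, g (z + m) = g z) :
    ∃ M, ∀ z, ‖g z‖ ≤ M := by
  obtain ⟨M, hM⟩ :=
    (isCompact_closedBall (0 : E d) √d).exists_bound_of_continuousOn hg.continuousOn
  refine ⟨M, fun z => ?_⟩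
  obtain ⟨m, hm, hzm⟩ := exists_mem_intLattice_norm_sub_le z
  rw [← sub_add_cancel z m, hper _ m hm]
  exact hM _ (mem_closedBall_zero_iff.2 hzm)

lemma norm_iterate_sub_le {G : Type*} [SeminormedAddCommGroup G] {g : G → G} {M : ℝ}
    (hM : ∀ x, ‖g x - x‖ ≤ M) (n : ℕ) (x : G) : ‖g^[n] x - x‖ ≤ n * M := by
  induction n with
  | zero => simp
  | succ n ih =>
    calc ‖g^[n + 1] x - x‖ = ‖(g (g^[n] x) - g^[n] x) + (g^[n] x - x)‖ := by
          rw [Function.iterate_succ_apply', sub_add_sub_cancel]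
      _ ≤ M + n * M := (norm_add_le _ _).trans (add_le_add (hM _) ih)
      _ = (n + 1 : ℕ) * M := by push_cast; ring

def devInTorus (F : E d ≃ₜ E d) (ρ v : E d) (n : ℕ) (ζ : Torus d) : ℝ :=
  devIn F ρ v n ζ.out

lemma devInTorus_mk (hper : ∀ z : E d, ∀ m ∈ intLattice d, F (z + m) = F z + m)
    (ρ v : E d) (n : ℕ) (z : E d) : devInTorus F ρ v n (Tproj d z) = devIn F ρ v n z := by
  have hmem : -(Tproj d z).out + z ∈ intLattice d :=
    QuotientAddGroup.eq.1 (QuotientAddGroup.out_eq' (Tproj d z))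
  rw [devInTorus, ← devIn_add_of_mem_intLattice hper ρ v n _ hmem, add_neg_cancel_left]

lemma continuous_devInTorus (hper : ∀ z : E d, ∀ m ∈ intLattice d, F (z + m) = F z + m)
    (ρ v : E d) (n : ℕ) : Continuous (devInTorus F ρ v n) := by
  refine (QuotientAddGroup.isQuotientMap_mk (intLattice d)).continuous_iff.2 ?_
  have hcomm : devInTorus F ρ v n ∘ QuotientAddGroup.mk = devIn F ρ v n :=
    funext (devInTorus_mk hper ρ v n)
  rw [hcomm]
  exact continuous_devIn ρ v n

lemma IsLiftOf.isAddCocycle_devInTorus {f : Torus d → Torus d} (h : IsLiftOf F f) (ρ v : E d) :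
    IsAddCocycle f (devInTorus F ρ v) := by
  intro a b ζ
  obtain ⟨z, rfl⟩ := Tproj_surjective ζ
  rw [← Function.Semiconj.iterate_right (f := Tproj d) h.1 a z]
  simp only [devInTorus_mk h.2]
  exact devIn_add ρ v a b z

lemma uniformlySublinearOn_devInTorus
    (hper : ∀ z : E d, ∀ m ∈ intLattice d, F (z + m) = F z + m) {K : Set (Torus d)}
    {ρ v : E d} (hrot : ∀ ρ' ∈ rotSetOn F K, ⟪ρ' - ρ, v⟫ = 0) :
    UniformlySublinearOn (devInTorus F ρ v) K := by
  intro ε hε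
  by_contra! h
  have hfreq : ∃ᶠ n in atTop, ∃ z, Tproj d z ∈ K ∧ ε * n < |devIn F ρ v n z| := by
    refine frequently_atTop.2 fun N => ?_
    obtain ⟨n, hn, ζ, hζ, hlt⟩ := h N
    obtain ⟨z, rfl⟩ := Tproj_surjective ζ
    exact ⟨n, hn, z, hζ, by rwa [devInTorus_mk hper] at hlt⟩
  obtain ⟨φ, hφ, hφz⟩ := extraction_of_frequently_atTop hfreq
  choose z hzK hzdev using hφz
  have hφ0 : ∀ i, φ i ≠ 0 := fun i h0 => by
    simpa [h0, devIn, dev] using hzdev i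
  obtain ⟨M, hM⟩ := exists_norm_le_of_intLattice_periodic (g := fun z => F z - z)
    (F.continuous.sub continuous_id) fun z m hm => by
      simp only [hper z m hm, add_sub_add_right_eq_sub]
  set u : ℕ → E d := fun i => (φ i : ℝ)⁻¹ • (F^[φ i] (z i) - z i)
  have hu : ∀ i, u i ∈ Metric.closedBall (0 : E d) M := fun i => by
    have hφi : (0 : ℝ) < φ i := Nat.cast_pos.2 (Nat.pos_of_ne_zero (hφ0 i))
    rw [mem_closedBall_zero_iff, norm_smul, norm_inv, Real.norm_natCast,
      inv_mul_le_iff₀ hφi]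
    exact norm_iterate_sub_le hM _ _
  obtain ⟨ρ', -, ψ, hψ, hconv⟩ := (isCompact_closedBall (0 : E d) M).tendsto_subseq hu
  have hρ' : ρ' ∈ rotSetOn F K :=
    ⟨φ ∘ ψ, z ∘ ψ, hφ.comp hψ, fun i => hzK (ψ i), hconv⟩
  have hfar : ∀ i, ε < |⟪u i - ρ, v⟫| := fun i => by
    rw [inner_inv_smul_sub ρ v (hφ0 i), abs_mul, abs_inv, Nat.abs_cast, inv_mul_eq_div,
      lt_div_iff₀ (Nat.cast_pos.2 (Nat.pos_of_ne_zero (hφ0 i)))]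
    exact hzdev i
  have hlim : Tendsto (fun i => |⟪u (ψ i) - ρ, v⟫|) atTop (𝓝 |⟪ρ' - ρ, v⟫|) :=
    ((((continuous_id.sub continuous_const).inner continuous_const).tendsto ρ').comp hconv).abs
  have := ge_of_tendsto hlim (Eventually.of_forall fun i => (hfar (ψ i)).le)
  rw [hrot ρ' hρ', abs_zero] at this
  linarith

end Lift

theorem residual_fully_unbounded_devIn_general {d : ℕ} (f : Torus d → Torus d)
    (F : E d ≃ₜ E d) (hlift : IsLiftOf F f) (K : Set (Torus d)) (hKc : IsCompact K)
    (hKinv : f '' K = K)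
    (hmin : ∀ z ∈ K, K ⊆ closure (Set.range fun n : ℕ => f^[n] z))
    (v : E d) (lam : ℝ)
    (hrot : ∀ ρ' ∈ rotSetOn F K, ⟪ρ' - lam • v, v⟫ = 0)
    (hunb : ∀ C : ℝ, ∃ (n : ℕ) (z : E d), Tproj d z ∈ K ∧ C < |devIn F (lam • v) v n z|) :
    ∃ R : Set (Torus d), R ⊆ K ∧ (∃ T : Set (Torus d), IsGδ T ∧ R = T ∩ K) ∧
      K ⊆ closure R ∧
      ∀ z : E d, Tproj d z ∈ R →
        (∀ C : ℝ, ∃ n : ℕ, C < devIn F (lam • v) v n z) ∧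
        (∀ C : ℝ, ∃ n : ℕ, devIn F (lam • v) v n z < C) := by
  have : CompactSpace K := isCompact_iff_compactSpace.mp hKc
  have hunb' : ∀ C, ∃ ζ ∈ K, ∃ n, C < |devInTorus F (lam • v) v n ζ| := fun C => by
    obtain ⟨n, z, hz, hlt⟩ := hunb C
    exact ⟨_, hz, n, by rwa [devInTorus_mk hlift.2]⟩
  obtain ⟨T, hT, hTd, hTx⟩ :=
    (hlift.isAddCocycle_devInTorus (lam • v) v).exists_isGδ_forall_exists_lt_and_gt
    hlift.continuous hKc (mapsTo_iff_image_subset.2 hKinv.subset) hmin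
    (continuous_devInTorus hlift.2 _ _) (uniformlySublinearOn_devInTorus hlift.2 hrot) hunb'
  refine ⟨T ∩ K, inter_subset_right, ⟨T, hT, rfl⟩, hTd, fun z hz => ?_⟩
  simpa only [devInTorus_mk hlift.2] using hTx _ hz.1

/-- **Lemma (minimal, fully unbounded deviations).** If `f|K` is minimal,
`ρ_K(F) ⊆ λv + {v}^⊥` and the deviations parallel to `v` are not uniformly bounded on
`K`, then there is a residual (dense `G_δ`) subset `ℛ ⊆ K` on which
`sup_{n∈ℕ} D_v(n,z) = +∞` and `inf_{n∈ℕ} D_v(n,z) = -∞`. -/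
theorem residual_fully_unbounded_devIn {d : ℕ} (f : Torus d → Torus d)
    (F : E d ≃ₜ E d) (hlift : IsLiftOf F f) (K : Set (Torus d)) (hKc : IsCompact K)
    (hKne : K.Nonempty) (hKinv : f '' K = K)
    (hmin : ∀ z ∈ K, K ⊆ closure (Set.range fun n : ℕ => f^[n] z))
    (v : E d) (hv : v ≠ 0) (lam : ℝ)
    (hrot : ∀ ρ' ∈ rotSetOn F K, ⟪ρ' - lam • v, v⟫ = 0)
    (hunb : ∀ C : ℝ, ∃ (n : ℕ) (z : E d), Tproj d z ∈ K ∧ C < |devIn F (lam • v) v n z|) :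
    ∃ R : Set (Torus d), R ⊆ K ∧ (∃ T : Set (Torus d), IsGδ T ∧ R = T ∩ K) ∧
      K ⊆ closure R ∧
      ∀ z : E d, Tproj d z ∈ R →
        (∀ C : ℝ, ∃ n : ℕ, C < devIn F (lam • v) v n z) ∧
        (∀ C : ℝ, ∃ n : ℕ, devIn F (lam • v) v n z < C) :=
  residual_fully_unbounded_devIn_general f F hlift K hKc hKinv hmin v lam hrot hunb
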